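/- arXiv:0912.2236 — 4 statements merged into one kernel-verified Lean document; each statement's English description precedes it below -/
import Mathlib

section
/- Let q = 2h+3 with h ≥ 0 an integer. For every integer a_0, every n ≥ 0 and all nonzero integers a_1, …, a_n, the two points of ℝ ∪ {∞} given by T^{a_0} S T^{a_1} ⋯ S T^{a_n} (S T)^{h} (S T^{2}) (S T)^{h} · 0 and T^{a_0} S T^{a_1} ⋯ S T^{a_n − 1} (S T^{−1})^{h} (S T^{−2}) (S T^{−1})^{h} · 0 coincide; equivalently, the corresponding SL(2,ℝ) matrices have proportional second columns. In the language of λ_q-continued fractions this says [a_0; a_1, …, a_n, 1^{h}, 2, 1^{h}] = [a_0; a_1, …, a_n − 1, (−1)^{h}, −2, (−1)^{h}]. -/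
/-- `λ_q = 2 cos (π / q)`. -/
noncomputable def lam (q : ℕ) : ℝ := 2 * Real.cos (Real.pi / (q : ℝ))

/-- The matrix `S = [[0,-1],[1,0]]`. -/
def Smat : Matrix (Fin 2) (Fin 2) ℝ := !![0, -1; 1, 0]

/-- The matrix `T^a = [[1, a·λ_q],[0,1]]`. -/
noncomputable def Tmat (q : ℕ) (a : ℤ) : Matrix (Fin 2) (Fin 2) ℝ :=
  !![1, (a : ℝ) * lam q; 0, 1]

/-- The word `T^{a_0} S T^{a_1} ⋯ S T^{a_n}`, where `a : Fin (n+1) → ℤ`. -/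
noncomputable def cfWord (q : ℕ) {n : ℕ} (a : Fin (n + 1) → ℤ) :
    Matrix (Fin 2) (Fin 2) ℝ :=
  Tmat q (a 0) * (List.ofFn (fun i : Fin n => Smat * Tmat q (a i.succ))).prod

/-!
`U = S T` has trace `λ_q = 2 cos θ` with `θ = π / q`, so `sin θ • U ^ k` has entries `± sin (j θ)`
and `U ^ q = -1`. For odd `q = 2h + 3` this and `S² = -1` give the ring identity
`T⁻¹ · W(T⁻¹) = W(T) · S T S`, where `W(T) = (S T)^h (S T²) (S T)^h`. Since `S T S` is lower
triangular with second diagonal entry `-1`, right multiplication by it negates the second column;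
so after multiplying on the left by `T^{a_0} S ⋯ S T^{a_n}` the two second columns differ by `-1`.
-/

open Matrix Real

lemma Tmat_mul_Tmat (q : ℕ) (x y : ℤ) : Tmat q x * Tmat q y = Tmat q (x + y) := by
  simp only [Tmat, mul_fin_two]
  congr
  all_goals push_cast; ring

lemma Smat_mul_Smat : Smat * Smat = -1 := by
  ext i j
  fin_cases i <;> fin_cases j <;> simp [Smat]

lemma mul_Smat_mul_Tmat_mul_Smat_apply_one (q : ℕ) (k : ℤ) (M : Matrix (Fin 2) (Fin 2) ℝ)
    (i : Fin 2) : (M * (Smat * Tmat q k * Smat)) i 1 = -M i 1 := by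
  simp [Smat, Tmat, Matrix.mul_apply, Fin.sum_univ_two]

lemma cfWord_succ (q : ℕ) {n : ℕ} (a : Fin (n + 2) → ℤ) :
    cfWord q a = cfWord q (Fin.init a) * (Smat * Tmat q (a (Fin.last _))) := by
  simp only [cfWord, List.ofFn_succ', List.prod_concat, mul_assoc]
  rfl

lemma cfWord_update_last_add (q : ℕ) {n : ℕ} (a : Fin (n + 1) → ℤ) (k : ℤ) :
    cfWord q (Function.update a (Fin.last n) (a (Fin.last n) + k)) = cfWord q a * Tmat q k := by
  cases n with
  | zero => simp [cfWord, Fin.last_zero, Tmat_mul_Tmat]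
  | succ n => rw [cfWord_succ, cfWord_succ, Fin.init_update_last, Function.update_self,
      ← Tmat_mul_Tmat, mul_assoc, mul_assoc]

theorem inv_mul_word_eq_word_mul_conj {R : Type*} [Ring R] (h : ℕ) {S T T' : R} (hS : S * S = -1)
    (hT : T * T' = 1) (hST : (S * T) ^ (2 * h + 3) = -1) :
    T' * ((S * T') ^ h * (S * (T' * T')) * (S * T') ^ h) =
      (S * T) ^ h * (S * (T * T)) * (S * T) ^ h * (S * T * S) := by
  -- `P` is the inverse of `-(S * T)`, an element of order `2 * h + 3`; both sides become words
  -- in `P`, `T` and `T'`.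
  set P := T' * S with hP
  have hTP : T * P = S := by rw [← mul_assoc, hT, one_mul]
  have hPTP : P * T * P = -T' := by rw [mul_assoc, hTP, hP, mul_assoc, hS, mul_neg_one]
  have hNP : -(S * T) * P = 1 := by
    rw [neg_mul, mul_assoc, hTP, hS, neg_neg]
  have hN : (-(S * T)) ^ (h + 1) = P ^ (h + 2) := by
    have hodd : (-(S * T)) ^ (2 * h + 3) = 1 := by
      rw [Odd.neg_pow ⟨h + 1, by ring⟩, hST, neg_neg]
    calc (-(S * T)) ^ (h + 1)
        = (-(S * T)) ^ (h + 1) * ((-(S * T)) ^ (h + 2) * P ^ (h + 2)) := by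
          rw [pow_mul_pow_eq_one _ hNP, mul_one]
      _ = P ^ (h + 2) := by
          rw [← mul_assoc, ← pow_add, show h + 1 + (h + 2) = 2 * h + 3 by ring, hodd, one_mul]
  have hsemi : ∀ k : ℕ, T' * (S * T') ^ k = P ^ k * T' :=
    fun k => SemiconjBy.pow_right (by simp only [SemiconjBy, hP, mul_assoc]) k
  have hL : T' * ((S * T') ^ h * (S * (T' * T')) * (S * T') ^ h) =
      P ^ (h + 1) * T' * P ^ h * T' := by
    calc _ = (T' * (S * T') ^ h) * S * T' * (T' * (S * T') ^ h) := by simp only [mul_assoc]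
      _ = _ := by rw [hsemi, pow_succ, hP]; simp only [mul_assoc]
  have hR : (S * T) ^ h * (S * (T * T)) * (S * T) ^ h * (S * T * S) =
      (-(S * T)) ^ (h + 1) * T * (-(S * T)) ^ (h + 1) * S := by
    rcases (h + 1).even_or_odd with he | ho
    · rw [he.neg_pow, pow_succ]; simp only [mul_assoc]
    · rw [ho.neg_pow, pow_succ]; simp only [neg_mul, mul_neg, neg_neg, mul_assoc]
  rw [hL, hR, hN, ← hTP]
  calc P ^ (h + 1) * T' * P ^ h * T' = P ^ (h + 1) * (P * T * P) * P ^ h * (P * T * P) := by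
        rw [hPTP]; simp only [mul_neg, neg_mul, neg_neg]
    _ = P ^ (h + 2) * T * P ^ (h + 2) * (T * P) := by
        rw [pow_succ P (h + 1), pow_succ' P h]; simp only [mul_assoc]

lemma sin_smul_pow_two_cos (θ : ℝ) (k : ℕ) :
    sin θ • !![0, -1; 1, 2 * cos θ] ^ k =
      !![-sin (k * θ - θ), -sin (k * θ); sin (k * θ), sin (k * θ + θ)] := by
  have hrec (x : ℝ) : sin (x + θ) + sin (x - θ) = 2 * cos θ * sin x := by
    rw [sin_add, sin_sub]; ring
  induction k with
  | zero => simp [one_fin_two]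
  | succ k ih =>
    rw [pow_succ, ← smul_mul, ih, mul_fin_two]
    simp only [Nat.cast_succ, add_mul, one_mul, add_sub_cancel_right]
    ext i j
    fin_cases i <;> fin_cases j <;>
      simp only [Fin.zero_eta, Fin.mk_one, Fin.isValue, of_apply, cons_val', cons_val_zero,
        cons_val_one, cons_val_fin_one, mul_zero, mul_one, zero_add, mul_neg, neg_neg, neg_mul]
    · linear_combination hrec (k * θ)
    · have h := hrec (k * θ + θ)
      rw [add_sub_cancel_right] at h
      linear_combination -h

lemma pow_eq_neg_one_of_mul_eq_pi {θ : ℝ} {q : ℕ} (hθ : sin θ ≠ 0) (hqθ : q * θ = π) :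
    !![0, -1; 1, 2 * cos θ] ^ q = -1 := by
  have h := sin_smul_pow_two_cos θ q
  rw [hqθ, sin_pi, sin_pi_sub, add_comm π, sin_add_pi] at h
  rw [← smul_right_inj hθ, h]
  ext i j
  fin_cases i <;> fin_cases j <;> simp

lemma Smat_mul_Tmat_one_pow_self {q : ℕ} (hq : 2 ≤ q) : (Smat * Tmat q 1) ^ q = -1 := by
  have hq0 : (0 : ℝ) < q := by positivity
  have hθ : sin (π / q) ≠ 0 := by
    refine (sin_pos_of_pos_of_lt_pi (by positivity) ?_).ne'
    rw [div_lt_iff₀ hq0]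
    have : (2 : ℝ) ≤ q := mod_cast hq
    nlinarith [pi_pos]
  convert pow_eq_neg_one_of_mul_eq_pi hθ (mul_div_cancel₀ _ hq0.ne') using 2
  simp [Smat, Tmat, lam]

theorem stmt1_general (h q : ℕ) (hq : q = 2 * h + 3) (n : ℕ)
    (a : Fin (n + 1) → ℤ) :
    ∃ c : ℝ, c ≠ 0 ∧
      (cfWord q a * ((Smat * Tmat q 1) ^ h * (Smat * Tmat q 2) *
          (Smat * Tmat q 1) ^ h)) 0 1 =
        c * (cfWord q (Function.update a (Fin.last n) (a (Fin.last n) - 1)) *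
          ((Smat * Tmat q (-1)) ^ h * (Smat * Tmat q (-2)) *
            (Smat * Tmat q (-1)) ^ h)) 0 1 ∧
      (cfWord q a * ((Smat * Tmat q 1) ^ h * (Smat * Tmat q 2) *
          (Smat * Tmat q 1) ^ h)) 1 1 =
        c * (cfWord q (Function.update a (Fin.last n) (a (Fin.last n) - 1)) *
          ((Smat * Tmat q (-1)) ^ h * (Smat * Tmat q (-2)) *
            (Smat * Tmat q (-1)) ^ h)) 1 1 := by
  have hword := inv_mul_word_eq_word_mul_conj h Smat_mul_Smat (T := Tmat q 1) (T' := Tmat q (-1))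
    (by rw [Tmat_mul_Tmat, add_neg_cancel]; simp [Tmat, one_fin_two])
    (hq ▸ Smat_mul_Tmat_one_pow_self (by omega))
  rw [Tmat_mul_Tmat, Tmat_mul_Tmat, one_add_one_eq_two, ← neg_add, one_add_one_eq_two] at hword
  have hcol (i : Fin 2) :
      (cfWord q a * ((Smat * Tmat q 1) ^ h * (Smat * Tmat q 2) * (Smat * Tmat q 1) ^ h)) i 1 =
        -(cfWord q (Function.update a (Fin.last n) (a (Fin.last n) - 1)) *
          ((Smat * Tmat q (-1)) ^ h * (Smat * Tmat q (-2)) * (Smat * Tmat q (-1)) ^ h)) i 1 := by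
    conv_rhs => rw [sub_eq_add_neg, cfWord_update_last_add, mul_assoc, hword, ← mul_assoc,
      mul_Smat_mul_Tmat_mul_Smat_apply_one, neg_neg]
  exact ⟨-1, by norm_num, by rw [hcol, neg_one_mul], by rw [hcol, neg_one_mul]⟩

/-- for `q = 2h+3`, the matrices
`T^{a_0} S T^{a_1} ⋯ S T^{a_n} (S T)^h (S T²) (S T)^h` and
`T^{a_0} S T^{a_1} ⋯ S T^{a_n - 1} (S T^{-1})^h (S T^{-2}) (S T^{-1})^h`
have proportional second columns, i.e.
`[a_0; a_1, …, a_n, 1^h, 2, 1^h] = [a_0; a_1, …, a_n - 1, (-1)^h, -2, (-1)^h]`. -/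
theorem stmt1 (h q : ℕ) (hq : q = 2 * h + 3) (n : ℕ)
    (a : Fin (n + 1) → ℤ) (ha : ∀ i : Fin (n + 1), i ≠ 0 → a i ≠ 0) :
    ∃ c : ℝ, c ≠ 0 ∧
      (cfWord q a * ((Smat * Tmat q 1) ^ h * (Smat * Tmat q 2) *
          (Smat * Tmat q 1) ^ h)) 0 1 =
        c * (cfWord q (Function.update a (Fin.last n) (a (Fin.last n) - 1)) *
          ((Smat * Tmat q (-1)) ^ h * (Smat * Tmat q (-2)) *
            (Smat * Tmat q (-1)) ^ h)) 0 1 ∧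
      (cfWord q a * ((Smat * Tmat q 1) ^ h * (Smat * Tmat q 2) *
          (Smat * Tmat q 1) ^ h)) 1 1 =
        c * (cfWord q (Function.update a (Fin.last n) (a (Fin.last n) - 1)) *
          ((Smat * Tmat q (-1)) ^ h * (Smat * Tmat q (-2)) *
            (Smat * Tmat q (-1)) ^ h)) 1 1 :=
  stmt1_general h q hq n a
end

section
/- Let q = 2h+2 with h ≥ 1 an integer and λ_q = 2 cos(π/q). Let g be the Möbius transformation (S T)^{h−1} (S T^{2}), i.e. g = θ_1^{∘(h−1)} ∘ θ_2 where θ_n(x) = −1/(x + n λ_q). Then r_q := 1 − λ_q satisfies −λ_q/2 < r_q < 0, g(r_q) = r_q, and the derivative of g at this fixed point equals g′(r_q) = (2 − λ_q)/(2 + λ_q), which lies in (0, 1). (Thus r_q = [0; \overline{1^{h−1}, 2}] is the attractive fixed point of the hyperbolic element (ST)^{h−1}ST² of the Hecke triangle group G_q, and the multiplier of the corresponding closed geodesic is (2 − λ_q)/(2 + λ_q).) -/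
open Real

/-- The paper's `θₙ = S Tⁿ`, with `c = n λ`. -/
noncomputable def negInvAdd (c x : ℝ) : ℝ := -1 / (x + c)

theorem hasDerivAt_negInvAdd {c x : ℝ} (hx : x + c ≠ 0) :
    HasDerivAt (negInvAdd c) ((x + c) ^ 2)⁻¹ x := by
  have h : HasDerivAt (fun y => -(y + c)⁻¹) (-(-1 / (x + c) ^ 2)) x :=
    (((hasDerivAt_id' x).add_const c).fun_inv hx).fun_neg
  convert h using 1
  · funext y
    rw [negInvAdd, neg_div, one_div]
  · ring

section ThreeTermRecurrence

variable {c : ℝ} {s : ℕ → ℝ}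

theorem negInvAdd_neg_div (hs : ∀ k, s (k + 2) = c * s (k + 1) - s k) (k : ℕ)
    (hk : s (k + 1) ≠ 0) : negInvAdd c (-s k / s (k + 1)) = -s (k + 1) / s (k + 2) := by
  rw [negInvAdd, hs, div_add' _ _ _ hk, div_div_eq_mul_div, neg_one_mul, neg_div,
    neg_div, neg_add_eq_sub]

theorem iterate_negInvAdd_neg_div (hs : ∀ k, s (k + 2) = c * s (k + 1) - s k) {n : ℕ}
    (hn : ∀ j < n, s (j + 1) ≠ 0) : (negInvAdd c)^[n] (-s 0 / s 1) = -s n / s (n + 1) := by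
  induction n with
  | zero => rfl
  | succ n ih =>
    rw [Function.iterate_succ_apply', ih fun j hj => hn j (by omega),
      negInvAdd_neg_div hs n (hn n n.lt_succ_self)]

theorem hasDerivAt_iterate_negInvAdd (hs : ∀ k, s (k + 2) = c * s (k + 1) - s k) {n : ℕ}
    (hn : ∀ j ≤ n, s (j + 1) ≠ 0) :
    HasDerivAt (negInvAdd c)^[n] ((s 1 / s (n + 1)) ^ 2) (-s 0 / s 1) := by
  induction n with
  | zero => simpa [div_self (hn 0 le_rfl)] using hasDerivAt_id (-s 0 / s 1)
  | succ n ih =>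
    have hn1 := hn n (by omega)
    have hn2 := hn (n + 1) le_rfl
    have hden : -s n / s (n + 1) + c = s (n + 2) / s (n + 1) := by
      rw [hs, eq_div_iff hn1, add_mul, div_mul_cancel₀ _ hn1]
      ring
    have hθ := hasDerivAt_negInvAdd (c := c) (hden ▸ div_ne_zero hn2 hn1)
    rw [hden, ← iterate_negInvAdd_neg_div hs fun j hj => hn j (by omega)] at hθ
    rw [Function.iterate_succ']
    refine (hθ.comp _ (ih fun j hj => hn j (by omega))).congr_deriv ?_
    field_simp

end ThreeTermRecurrence

noncomputable def sinOdd (α : ℝ) (j : ℕ) : ℝ := sin ((2 * j + 1) * α / 2)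

theorem sinOdd_zero (α : ℝ) : sinOdd α 0 = sin (α / 2) := by
  simp [sinOdd]

theorem sin_add_eq_two_mul_cos_mul_sin_sub (x y : ℝ) :
    sin (x + y) = 2 * cos y * sin x - sin (x - y) := by
  rw [sin_add, sin_sub]; ring

theorem sinOdd_add_two (α : ℝ) (k : ℕ) :
    sinOdd α (k + 2) = 2 * cos α * sinOdd α (k + 1) - sinOdd α k := by
  have h := sin_add_eq_two_mul_cos_mul_sin_sub ((2 * (k + 1) + 1) * α / 2) α
  simp only [sinOdd]
  push_cast
  convert h using 2
  · ring
  · congr 1; ring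

theorem sinOdd_one (α : ℝ) : sinOdd α 1 = (2 * cos α + 1) * sinOdd α 0 := by
  have h := sin_add_eq_two_mul_cos_mul_sin_sub (α / 2) α
  rw [show α / 2 - α = -(α / 2) by ring, sin_neg] at h
  simp only [sinOdd]
  norm_num
  rw [show 3 * α / 2 = α / 2 + α by ring, h]
  ring

theorem tan_sq_half (x : ℝ) : tan (x / 2) ^ 2 = (1 - cos x) / (1 + cos x) := by
  have hcos : cos x = 2 * cos (x / 2) ^ 2 - 1 := by
    rw [← cos_two_mul, mul_div_cancel₀ x two_ne_zero]
  rw [tan_eq_sin_div_cos, div_pow, sin_sq, hcos]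
  rcases eq_or_ne (cos (x / 2)) 0 with h | h
  · simp [h]
  · field_simp
    ring

/-- The Hecke group element `(S T)ᵐ (S T²)` when `c = λ`. -/
noncomputable def heckeWord (c : ℝ) (m : ℕ) : ℝ → ℝ := (negInvAdd c)^[m] ∘ negInvAdd (2 * c)

section EvenHecke

variable {α : ℝ} {m : ℕ}

theorem sinOdd_pos (hα : 0 < α) (hαm : (2 * m + 4) * α = π) {j : ℕ} (hj : j ≤ m + 1) :
    0 < sinOdd α j := by
  have hj' : (j : ℝ) ≤ m + 1 := by exact_mod_cast hj
  apply sin_pos_of_pos_of_lt_pi <;> nlinarith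

theorem sinOdd_succ_eq_cos (hαm : (2 * m + 4) * α = π) : sinOdd α (m + 1) = cos (α / 2) := by
  rw [sinOdd, ← sin_pi_div_two_sub]
  congr 1
  push_cast
  linear_combination hαm / 2

/-- Symmetry of the sine arch: `(2m + 5) α / 2 = π - (2m + 3) α / 2`. -/
theorem sinOdd_add_two_eq_add_one (hαm : (2 * m + 4) * α = π) :
    sinOdd α (m + 2) = sinOdd α (m + 1) := by
  rw [sinOdd, sinOdd, ← sin_pi_sub]
  congr 1
  push_cast
  linear_combination -hαm

theorem sinOdd_eq_mul_sinOdd_succ (hαm : (2 * m + 4) * α = π) :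
    sinOdd α m = (2 * cos α - 1) * sinOdd α (m + 1) := by
  linear_combination sinOdd_add_two α m - sinOdd_add_two_eq_add_one hαm

theorem negInvAdd_two_mul_one_sub (hα : 0 < α) (hαm : (2 * m + 4) * α = π) :
    negInvAdd (2 * (2 * cos α)) (1 - 2 * cos α) = -sinOdd α 0 / sinOdd α 1 := by
  have h0 := (sinOdd_pos hα hαm (Nat.zero_le _)).ne'
  rw [sinOdd_one, negInvAdd, show 1 - 2 * cos α + 2 * (2 * cos α) = 2 * cos α + 1 by ring,
    neg_div, neg_div, div_mul_cancel_right₀ h0, one_div]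

theorem heckeWord_apply (hα : 0 < α) (hαm : (2 * m + 4) * α = π) :
    heckeWord (2 * cos α) m (1 - 2 * cos α) = 1 - 2 * cos α := by
  have hpos := fun j (hj : j < m) => (sinOdd_pos hα hαm (j := j + 1) (by omega)).ne'
  rw [heckeWord, Function.comp_apply, negInvAdd_two_mul_one_sub hα hαm,
    iterate_negInvAdd_neg_div (sinOdd_add_two α) hpos, sinOdd_eq_mul_sinOdd_succ hαm,
    neg_div, mul_div_cancel_right₀ _ (sinOdd_pos hα hαm le_rfl).ne']
  ring

theorem hasDerivAt_heckeWord (hα : 0 < α) (hαm : (2 * m + 4) * α = π) :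
    HasDerivAt (heckeWord (2 * cos α) m) ((1 - cos α) / (1 + cos α)) (1 - 2 * cos α) := by
  have hpos := fun j (hj : j ≤ m + 1) => (sinOdd_pos hα hαm hj).ne'
  have hs1 : 2 * cos α + 1 = sinOdd α 1 / sinOdd α 0 := by
    rw [sinOdd_one, mul_div_cancel_right₀ _ (hpos 0 (by omega))]
  have hden : 1 - 2 * cos α + 2 * (2 * cos α) = sinOdd α 1 / sinOdd α 0 := by
    rw [← hs1]; ring
  have hθ := hasDerivAt_negInvAdd (hden ▸ div_ne_zero (hpos 1 (by omega)) (hpos 0 (by omega)))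
  have hiter := hasDerivAt_iterate_negInvAdd (n := m) (sinOdd_add_two α) fun j hj =>
    hpos (j + 1) (by omega)
  rw [← negInvAdd_two_mul_one_sub hα hαm] at hiter
  refine (hiter.comp _ hθ).congr_deriv ?_
  rw [← tan_sq_half, tan_eq_sin_div_cos, ← sinOdd_zero, ← sinOdd_succ_eq_cos hαm, hden]
  field_simp [hpos 0 (by omega), hpos 1 (by omega)]

end EvenHecke

theorem lam_lt_two {q : ℕ} (hq : 0 < q) : lam q < 2 := by
  have hα : 0 < π / q := by positivity
  have hαπ : π / q ≤ π := div_le_self pi_pos.le (by exact_mod_cast hq)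
  have := cos_lt_cos_of_nonneg_of_le_pi le_rfl hαπ hα
  rw [cos_zero] at this
  rw [lam]; linarith

theorem one_lt_lam {q : ℕ} (hq : 3 < q) : 1 < lam q := by
  have hα : π / q < π / 3 := div_lt_div_of_pos_left pi_pos (by norm_num) (by exact_mod_cast hq)
  have := cos_lt_cos_of_nonneg_of_le_pi (by positivity) (by linarith [pi_pos]) hα
  rw [cos_pi_div_three] at this
  rw [lam]; linarith

/-- for even `q = 2h+2` with `h ≥ 1`, `r_q := 1 - λ_q` satisfies
`-λ_q/2 < r_q < 0`, it is a fixed point of `g = θ₁^{∘(h-1)} ∘ θ₂`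
(where `θ_n(x) = -1/(x + nλ_q)`), and `g'(r_q) = (2-λ_q)/(2+λ_q) ∈ (0,1)`. -/
theorem stmt4 (h q : ℕ) (hh : 1 ≤ h) (hq : q = 2 * h + 2) :
    let r : ℝ := 1 - lam q
    let g : ℝ → ℝ :=
      (fun x : ℝ => -1 / (x + lam q))^[h - 1] ∘ (fun x : ℝ => -1 / (x + 2 * lam q))
    (-(lam q) / 2 < r ∧ r < 0) ∧
    g r = r ∧
    deriv g r = (2 - lam q) / (2 + lam q) ∧
    0 < (2 - lam q) / (2 + lam q) ∧ (2 - lam q) / (2 + lam q) < 1 := by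
  intro r g
  obtain ⟨m, rfl⟩ : ∃ m, h = m + 1 := ⟨h - 1, by omega⟩
  have hg : g = heckeWord (2 * cos (π / q)) m := rfl
  have hα : 0 < π / q := by subst hq; positivity
  have hαm : (2 * m + 4) * (π / q) = π := by subst hq; push_cast; field_simp; ring
  have hmult : (2 - lam q) / (2 + lam q) = (1 - cos (π / q)) / (1 + cos (π / q)) := by
    rw [lam, ← mul_one_sub, ← mul_one_add, mul_div_mul_left _ _ two_ne_zero]
  have hlam₁ := one_lt_lam (q := q) (by omega)
  have hlam₂ := lam_lt_two (q := q) (by omega)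
  refine ⟨⟨by linarith, by linarith⟩, heckeWord_apply hα hαm, ?_, ?_, ?_⟩
  · rw [hg, hmult]
    exact (hasDerivAt_heckeWord hα hαm).deriv
  · exact div_pos (by linarith) (by linarith)
  · rw [div_lt_one (by linarith)]
    linarith
end

section
/- Let q = 2h+3 with h ≥ 1 an integer and λ_q = 2 cos(π/q). With θ_{−1}(x) = −1/(x − λ_q), θ_{−2}(x) = −1/(x − 2λ_q) and θ_1(x) = −1/(x + λ_q), define b_i = θ_{−1}^{∘i}(0) − λ_q (= T^{−1}(S T^{−1})^{i} · 0) for 0 ≤ i ≤ h, and a_i = θ_{−1}^{∘i}(θ_{−2}(θ_{−1}^{∘h}(0))) − λ_q (= T^{−1}(S T^{−1})^{i} (S T^{−2}) (S T^{−1})^{h} · 0) for 0 ≤ i ≤ h. Then: (S T)^{h−i} · (−λ_q/2) = a_i for every 0 ≤ i ≤ h; (S T)^{h+1−i} · (θ_1^{∘h}(0)) = b_i for every 1 ≤ i ≤ h; and the points interleave strictly: −λ_q = b_0 < a_0 < b_1 < a_1 < b_2 < a_2 < ⋯ < b_h < a_h = −λ_q/2. -/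
/-!
With `θ = π / q`, the sequences `s n = sin (n θ)` and `t n = sin ((n - 1/2) θ)` both satisfy
`u (n + 2) = λ_q u (n + 1) - u n`. For any such `u`, the map `T⁻¹S : y ↦ -1/y - λ_q` sends
`-u (n + 1) / u n` to `-u (n + 2) / u (n + 1)`, and `ST : x ↦ -1/(x + λ_q)` undoes it. Hence
`b i = -s (i + 2) / s (i + 1)` and `a i = -t (i + 3) / t (i + 2)`, the two orbits being joined by
`s (h + 2) = s (h + 1)` and `t 0 = -t 1`; `θ_1^{∘h}(0)` lies on the `s`-orbit because `s q = 0`, and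
`a h = -cos θ` because `t (h + 2) = sin (π / 2)`. The interleaving is the sign of the Casoratian
of `s` and `t`, which is the constant `sin θ sin (θ / 2) > 0`.
-/

open Real Function

section Recurrence

variable {c : ℝ} {u : ℕ → ℝ}

noncomputable def negRatio (u : ℕ → ℝ) (n : ℕ) : ℝ := -(u (n + 1) / u n)

/-- `T⁻¹S` for `T x = x + c`: conjugating `ST⁻¹ : x ↦ -1/(x - c)` by `T` gives this map. -/
noncomputable def tInvS (c y : ℝ) : ℝ := -1 / y - c

theorem leftInverse_tInvS (c : ℝ) : LeftInverse (fun x : ℝ => -1 / (x + c)) (tInvS c) := by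
  intro y
  simp only [tInvS, sub_add_cancel]
  rw [div_div_eq_mul_div, neg_one_mul, neg_div_neg_eq, div_one]

theorem semiconj_sub_tInvS (c : ℝ) :
    Semiconj (· - c) (fun x : ℝ => -1 / (x - c)) (tInvS c) :=
  fun _ => rfl

theorem tInvS_negRatio {n : ℕ} (hu : u (n + 2) = c * u (n + 1) - u n) (hn : u (n + 1) ≠ 0) :
    tInvS c (negRatio u n) = negRatio u (n + 1) := by
  rw [tInvS, negRatio, negRatio, neg_div_neg_eq, one_div_div, hu]
  field_simp
  ring

theorem iterate_tInvS_negRatio (hu : ∀ n, u (n + 2) = c * u (n + 1) - u n) {n k : ℕ}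
    (hne : ∀ j, n < j → j ≤ n + k → u j ≠ 0) :
    (tInvS c)^[k] (negRatio u n) = negRatio u (n + k) := by
  induction k with
  | zero => rfl
  | succ k ih =>
    rw [iterate_succ_apply', ih fun j hj hjk => hne j hj (by omega),
      tInvS_negRatio (hu _) (hne _ (by omega) (by omega))]
    rfl

theorem iterate_neg_inv_add_negRatio (hu : ∀ n, u (n + 2) = c * u (n + 1) - u n) {n k : ℕ}
    (hne : ∀ j, n < j → j ≤ n + k → u j ≠ 0) :
    (fun x : ℝ => -1 / (x + c))^[k] (negRatio u (n + k)) = negRatio u n := by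
  rw [← iterate_tInvS_negRatio hu hne]
  exact (leftInverse_tInvS c).iterate k _

theorem iterate_neg_inv_sub_zero (hu : ∀ n, u (n + 2) = c * u (n + 1) - u n) (h0 : u 0 = 0)
    {k : ℕ} (hne : ∀ j, 0 < j → j ≤ k + 1 → u j ≠ 0) :
    (fun x : ℝ => -1 / (x - c))^[k] 0 - c = negRatio u (k + 1) := by
  have hstart : (0 : ℝ) - c = negRatio u 1 := by
    rw [negRatio, hu 0, h0]
    field_simp [hne 1 one_pos (by omega)]
    ring
  refine ((semiconj_sub_tInvS c).iterate_right k 0).trans ?_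
  rw [hstart, iterate_tInvS_negRatio hu fun j hj hjk => hne j (by omega) (by omega), add_comm]

theorem iterate_neg_inv_sub_of_neg_inv_sub_two_mul (c y : ℝ) (i : ℕ) :
    (fun x : ℝ => -1 / (x - c))^[i] (-1 / (y - 2 * c)) - c = (tInvS c)^[i + 1] (y - c - c) := by
  rw [iterate_succ_apply, tInvS, sub_sub, ← two_mul]
  exact (semiconj_sub_tInvS c).iterate_right i _

end Recurrence

section SinSeq

noncomputable def sinSeq (α θ : ℝ) (n : ℕ) : ℝ := sin (α + n * θ)

theorem sinSeq_add_two (α θ : ℝ) (n : ℕ) :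
    sinSeq α θ (n + 2) = 2 * cos θ * sinSeq α θ (n + 1) - sinSeq α θ n := by
  simp only [sinSeq, Nat.cast_add, Nat.cast_ofNat, Nat.cast_one]
  rw [show α + (n + 2) * θ = α + (n + 1) * θ + θ by ring,
    show α + n * θ = α + (n + 1) * θ - θ by ring, sin_add, sin_sub]
  ring

theorem sinSeq_casoratian (α β θ : ℝ) (n m : ℕ) :
    sinSeq α θ (n + 1) * sinSeq β θ m - sinSeq α θ n * sinSeq β θ (m + 1)
      = sin θ * sin (β + m * θ - (α + n * θ)) := by
  have key (x y : ℝ) : sin (x + θ) * sin y - sin x * sin (y + θ) = sin θ * sin (y - x) := by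
    rw [sin_add, sin_add, sin_sub]
    ring
  simp only [sinSeq, Nat.cast_add, Nat.cast_one]
  rw [← key, add_one_mul, add_one_mul, add_assoc, add_assoc]

theorem negRatio_sinSeq_lt {α β θ : ℝ} {n m : ℕ} (hu : 0 < sinSeq α θ n) (hv : 0 < sinSeq β θ m)
    (hw : 0 < sin θ * sin (β + m * θ - (α + n * θ))) :
    negRatio (sinSeq α θ) n < negRatio (sinSeq β θ) m := by
  rw [negRatio, negRatio, neg_lt_neg_iff, div_lt_div_iff₀ hv hu]
  linarith [sinSeq_casoratian α β θ n m]

end SinSeq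

section OddAngle

variable {h n k : ℕ} {θ : ℝ}

theorem pos_of_odd_mul_eq_pi (hθ : (2 * h + 3) * θ = π) : 0 < θ := by
  nlinarith [pi_pos, (Nat.cast_nonneg h : (0 : ℝ) ≤ h)]

theorem lam_eq_two_mul_cos (hθ : (2 * h + 3) * θ = π) : lam (2 * h + 3) = 2 * cos θ := by
  rw [lam, ← hθ]
  push_cast
  rw [mul_div_cancel_left₀ _ (by positivity)]

theorem sinSeq_add_two_lam (hθ : (2 * h + 3) * θ = π) (α : ℝ) (n : ℕ) :
    sinSeq α θ (n + 2) = lam (2 * h + 3) * sinSeq α θ (n + 1) - sinSeq α θ n := by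
  rw [lam_eq_two_mul_cos hθ]
  exact sinSeq_add_two α θ n

theorem sinSeq_zero_pos (hθ : (2 * h + 3) * θ = π) (h1 : 0 < n) (h2 : n ≤ 2 * h + 2) :
    0 < sinSeq 0 θ n := by
  have hθ0 := pos_of_odd_mul_eq_pi hθ
  have h1' : (1 : ℝ) ≤ n := by exact_mod_cast h1
  have h2' : (n : ℝ) ≤ 2 * h + 2 := by exact_mod_cast h2
  apply sin_pos_of_pos_of_lt_pi <;> nlinarith

theorem sinSeq_neg_half_pos (hθ : (2 * h + 3) * θ = π) (h1 : 0 < n) (h2 : n ≤ h + 2) :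
    0 < sinSeq (-(θ / 2)) θ n := by
  have hθ0 := pos_of_odd_mul_eq_pi hθ
  have h1' : (1 : ℝ) ≤ n := by exact_mod_cast h1
  have h2' : (n : ℝ) ≤ h + 2 := by exact_mod_cast h2
  apply sin_pos_of_pos_of_lt_pi <;> nlinarith

theorem sin_mul_sin_half_pos (hθ : (2 * h + 3) * θ = π) : 0 < sin θ * sin (θ / 2) := by
  have hθ0 := pos_of_odd_mul_eq_pi hθ
  have hh : (0 : ℝ) ≤ h := Nat.cast_nonneg h
  apply mul_pos <;> apply sin_pos_of_pos_of_lt_pi <;> nlinarith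

theorem negRatio_sinSeq_zero_two_mul_add_two (hθ : (2 * h + 3) * θ = π) :
    negRatio (sinSeq 0 θ) (2 * h + 2) = 0 := by
  have hπ : sinSeq 0 θ (2 * h + 3) = 0 := by simp [sinSeq, hθ]
  rw [negRatio, hπ, zero_div, neg_zero]

theorem negRatio_sinSeq_zero_add_one (hθ : (2 * h + 3) * θ = π) :
    negRatio (sinSeq 0 θ) (h + 1) = -1 := by
  have hsymm : sinSeq 0 θ (h + 2) = sinSeq 0 θ (h + 1) := by
    simp only [sinSeq, zero_add]
    rw [show ((h + 2 : ℕ) : ℝ) * θ = π - (h + 1 : ℕ) * θ by push_cast; linarith, sin_pi_sub]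
  rw [negRatio, hsymm, div_self (sinSeq_zero_pos hθ h.succ_pos (by omega)).ne']

theorem negRatio_sinSeq_neg_half_one (hθ : (2 * h + 3) * θ = π) :
    negRatio (sinSeq (-(θ / 2)) θ) 1 = -1 - lam (2 * h + 3) := by
  have hodd : sinSeq (-(θ / 2)) θ 0 = -sinSeq (-(θ / 2)) θ 1 := by
    simp only [sinSeq, Nat.cast_zero, Nat.cast_one, zero_mul, add_zero, one_mul, sin_neg,
      show -(θ / 2) + θ = θ / 2 by ring]
  have hne := (sinSeq_neg_half_pos hθ one_pos (by omega)).ne'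
  rw [negRatio, sinSeq_add_two_lam hθ, hodd, zero_add, sub_neg_eq_add, ← add_one_mul,
    mul_div_cancel_right₀ _ hne]
  ring

theorem negRatio_sinSeq_neg_half_add_two (hθ : (2 * h + 3) * θ = π) :
    negRatio (sinSeq (-(θ / 2)) θ) (h + 2) = -lam (2 * h + 3) / 2 := by
  have hmid : sinSeq (-(θ / 2)) θ (h + 2) = 1 := by
    rw [sinSeq, show -(θ / 2) + ((h + 2 : ℕ) : ℝ) * θ = π / 2 by push_cast; linarith,
      sin_pi_div_two]
  have hnext : sinSeq (-(θ / 2)) θ (h + 3) = cos θ := by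
    rw [sinSeq, show -(θ / 2) + ((h + 3 : ℕ) : ℝ) * θ = θ + π / 2 by push_cast; linarith,
      sin_add_pi_div_two]
  rw [negRatio, hmid, hnext, div_one, lam_eq_two_mul_cos hθ]
  ring

theorem iterate_neg_inv_sub_lam_zero (hθ : (2 * h + 3) * θ = π) (hn : n ≤ 2 * h + 1) :
    (fun x : ℝ => -1 / (x - lam (2 * h + 3)))^[n] 0 - lam (2 * h + 3)
      = negRatio (sinSeq 0 θ) (n + 1) :=
  iterate_neg_inv_sub_zero (sinSeq_add_two_lam hθ 0) (by simp [sinSeq])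
    fun _ h1 h2 => (sinSeq_zero_pos hθ h1 (by omega)).ne'

theorem iterate_neg_inv_sub_lam_of_two_mul (hθ : (2 * h + 3) * θ = π) (hn : n ≤ h) :
    (fun x : ℝ => -1 / (x - lam (2 * h + 3)))^[n]
        (-1 / ((fun x : ℝ => -1 / (x - lam (2 * h + 3)))^[h] 0 - 2 * lam (2 * h + 3)))
      - lam (2 * h + 3) = negRatio (sinSeq (-(θ / 2)) θ) (n + 2) := by
  rw [iterate_neg_inv_sub_of_neg_inv_sub_two_mul, iterate_neg_inv_sub_lam_zero hθ (by omega),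
    negRatio_sinSeq_zero_add_one hθ, ← negRatio_sinSeq_neg_half_one hθ,
    iterate_tInvS_negRatio (sinSeq_add_two_lam hθ _)
      fun _ h1 h2 => (sinSeq_neg_half_pos hθ (by omega) (by omega)).ne', add_comm]

theorem iterate_neg_inv_add_lam_zero (hθ : (2 * h + 3) * θ = π) (hnk : n + k = 2 * h + 2) :
    (fun x : ℝ => -1 / (x + lam (2 * h + 3)))^[k] 0 = negRatio (sinSeq 0 θ) n := by
  conv_lhs => rw [← negRatio_sinSeq_zero_two_mul_add_two hθ, ← hnk]
  exact iterate_neg_inv_add_negRatio (sinSeq_add_two_lam hθ _)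
    fun _ h1 h2 => (sinSeq_zero_pos hθ (by omega) (by omega)).ne'

theorem iterate_neg_inv_add_lam_neg_half (hθ : (2 * h + 3) * θ = π) (hnk : n + k = h) :
    (fun x : ℝ => -1 / (x + lam (2 * h + 3)))^[k] (-lam (2 * h + 3) / 2)
      = negRatio (sinSeq (-(θ / 2)) θ) (n + 2) := by
  rw [← negRatio_sinSeq_neg_half_add_two hθ, show h + 2 = n + 2 + k by omega]
  exact iterate_neg_inv_add_negRatio (sinSeq_add_two_lam hθ _)
    fun _ h1 h2 => (sinSeq_neg_half_pos hθ (by omega) (by omega)).ne'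

theorem negRatio_sinSeq_zero_lt_neg_half (hθ : (2 * h + 3) * θ = π) (hn : n ≤ h) :
    negRatio (sinSeq 0 θ) (n + 1) < negRatio (sinSeq (-(θ / 2)) θ) (n + 2) := by
  refine negRatio_sinSeq_lt (sinSeq_zero_pos hθ (by omega) (by omega))
    (sinSeq_neg_half_pos hθ (by omega) (by omega)) ?_
  convert sin_mul_sin_half_pos hθ using 3
  push_cast
  ring

theorem negRatio_sinSeq_neg_half_lt_zero (hθ : (2 * h + 3) * θ = π) (hn : n < h) :
    negRatio (sinSeq (-(θ / 2)) θ) (n + 2) < negRatio (sinSeq 0 θ) (n + 2) := by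
  refine negRatio_sinSeq_lt (sinSeq_neg_half_pos hθ (by omega) (by omega))
    (sinSeq_zero_pos hθ (by omega) (by omega)) ?_
  convert sin_mul_sin_half_pos hθ using 3
  push_cast
  ring

end OddAngle

theorem stmt10_general (h q : ℕ) (hq : q = 2 * h + 3) :
    let t1 : ℝ → ℝ := fun x => -1 / (x + lam q)
    let tm1 : ℝ → ℝ := fun x => -1 / (x - lam q)
    let tm2 : ℝ → ℝ := fun x => -1 / (x - 2 * lam q)
    let b : ℕ → ℝ := fun i => tm1^[i] 0 - lam q
    let a : ℕ → ℝ := fun i => tm1^[i] (tm2 (tm1^[h] 0)) - lam q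
    (∀ i ≤ h, t1^[h - i] (-(lam q) / 2) = a i) ∧
    (∀ i, 1 ≤ i → i ≤ h → t1^[h + 1 - i] (t1^[h] 0) = b i) ∧
    b 0 = -(lam q) ∧ a h = -(lam q) / 2 ∧
    (∀ i ≤ h, b i < a i) ∧ (∀ i, i < h → a i < b (i + 1)) := by
  subst hq
  intro t1 tm1 tm2 b a
  obtain ⟨θ, hθ⟩ : ∃ θ : ℝ, (2 * h + 3) * θ = π := ⟨π / (2 * h + 3), by field_simp⟩
  have hb (i : ℕ) (hi : i ≤ 2 * h + 1) : b i = negRatio (sinSeq 0 θ) (i + 1) :=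
    iterate_neg_inv_sub_lam_zero hθ hi
  have ha (i : ℕ) (hi : i ≤ h) : a i = negRatio (sinSeq (-(θ / 2)) θ) (i + 2) :=
    iterate_neg_inv_sub_lam_of_two_mul hθ hi
  refine ⟨fun i hi => ?_, fun i _ hi => ?_, zero_sub _, ?_, fun i hi => ?_, fun i hi => ?_⟩
  · rw [ha i hi]
    exact iterate_neg_inv_add_lam_neg_half hθ (by omega)
  · rw [← iterate_add_apply, hb i (by omega)]
    exact iterate_neg_inv_add_lam_zero hθ (by omega)
  · rw [ha h le_rfl]
    exact negRatio_sinSeq_neg_half_add_two hθ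
  · rw [hb i (by omega), ha i hi]
    exact negRatio_sinSeq_zero_lt_neg_half hθ hi
  · rw [hb (i + 1) (by omega), ha i hi.le]
    exact negRatio_sinSeq_neg_half_lt_zero hθ hi

/-- for odd `q = 2h+3` with `h ≥ 1`, with
`θ_{-1}(x) = -1/(x-λ_q)`, `θ_{-2}(x) = -1/(x-2λ_q)`, `θ_1(x) = -1/(x+λ_q)`,
`b_i = θ_{-1}^{∘i}(0) - λ_q` and `a_i = θ_{-1}^{∘i}(θ_{-2}(θ_{-1}^{∘h}(0))) - λ_q`:
`(ST)^{h-i} · (-λ_q/2) = a_i` for `0 ≤ i ≤ h`;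
`(ST)^{h+1-i} · (θ_1^{∘h}(0)) = b_i` for `1 ≤ i ≤ h`; and the points interleave
strictly: `-λ_q = b_0 < a_0 < b_1 < a_1 < ⋯ < b_h < a_h = -λ_q/2`. -/
theorem stmt10 (h q : ℕ) (hh : 1 ≤ h) (hq : q = 2 * h + 3) :
    let t1 : ℝ → ℝ := fun x => -1 / (x + lam q)
    let tm1 : ℝ → ℝ := fun x => -1 / (x - lam q)
    let tm2 : ℝ → ℝ := fun x => -1 / (x - 2 * lam q)
    let b : ℕ → ℝ := fun i => tm1^[i] 0 - lam q
    let a : ℕ → ℝ := fun i => tm1^[i] (tm2 (tm1^[h] 0)) - lam q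
    (∀ i ≤ h, t1^[h - i] (-(lam q) / 2) = a i) ∧
    (∀ i, 1 ≤ i → i ≤ h → t1^[h + 1 - i] (t1^[h] 0) = b i) ∧
    b 0 = -(lam q) ∧ a h = -(lam q) / 2 ∧
    (∀ i ≤ h, b i < a i) ∧ (∀ i, i < h → a i < b (i + 1)) :=
  stmt10_general h q hq
end

section
/- Let q = 2h+2 with h ≥ 2 an integer, λ_q = 2 cos(π/q), θ_n(x) = −1/(x + n λ_q), and let c_i = T^{−1}(S T^{−1})^{i} · 0 for 1 ≤ i ≤ h (so c_1 < c_2 < ⋯ < c_h = −λ_q/2). Define the open intervals I_i = (c_i, λ_q/4) and I_{−i} = −I_i = (−λ_q/4, −c_i) for 1 ≤ i ≤ h. Then: (a) θ_n([c_i, λ_q/4]) ⊆ I_h for every n ≥ 2 and 1 ≤ i ≤ h; (b) θ_{−n}([c_i, λ_q/4]) ⊆ I_{−h} for every n ≥ 1 and 1 ≤ i ≤ h; (c) θ_1(I_i) ⊆ I_{i−1} for every 2 ≤ i ≤ h; and the mirror statements hold: θ_{−n}([−λ_q/4, −c_i]) ⊆ I_{−h} for n ≥ 2, θ_n([−λ_q/4,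 −c_i]) ⊆ I_h for n ≥ 1, and θ_{−1}(I_{−i}) ⊆ I_{−(i−1)} for 2 ≤ i ≤ h. -/
open Real Set

noncomputable def theta (L : ℝ) (n : ℤ) (x : ℝ) : ℝ := -1 / (x + n * L)

/-- The map `S T⁻¹`. -/
noncomputable def stInv (L x : ℝ) : ℝ := -1 / (x - L)

section Theta

variable {L : ℝ}

theorem theta_neg_neg (L : ℝ) (n : ℤ) (x : ℝ) : theta L (-n) (-x) = -theta L n x := by
  simp only [theta, Int.cast_neg]
  rw [show -x + -(n : ℝ) * L = -(x + n * L) by ring, div_neg]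

theorem theta_neg_mem_Ioo_iff {n : ℤ} {x a b : ℝ} :
    theta L (-n) x ∈ Ioo (-b) (-a) ↔ theta L n (-x) ∈ Ioo a b := by
  rw [← neg_neg x, theta_neg_neg, neg_neg, neg_mem_Ioo_iff, neg_neg, neg_neg]

theorem neg_one_div_mem_Ioo (hL : √3 ≤ L) {D : ℝ} (hD : 3 * L / 4 ≤ D) :
    -1 / D ∈ Ioo (-(L / 2)) 0 := by
  have hL0 : 0 < L := (sqrt_pos.2 three_pos).trans_le hL
  have hL3 : 3 ≤ L ^ 2 := by
    simpa [sq_sqrt] using pow_le_pow_left₀ (sqrt_nonneg 3) hL 2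
  have hD0 : 0 < D := by linarith
  refine ⟨?_, div_neg_of_neg_of_pos (by norm_num) hD0⟩
  rw [neg_div, neg_lt_neg_iff, div_lt_div_iff₀ hD0 two_pos]
  nlinarith

theorem theta_mem_Ioo_of_two_le (hL : √3 ≤ L) {n : ℤ} (hn : 2 ≤ n) {x : ℝ} (hx : -L < x) :
    theta L n x ∈ Ioo (-(L / 2)) 0 := by
  have hL0 : 0 < L := (sqrt_pos.2 three_pos).trans_le hL
  have hn' : (2 : ℝ) ≤ n := by exact_mod_cast hn
  exact neg_one_div_mem_Ioo hL (by nlinarith)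

theorem theta_mem_Ioo_of_one_le (hL : √3 ≤ L) {n : ℤ} (hn : 1 ≤ n) {x : ℝ}
    (hx : -(L / 4) ≤ x) :
    theta L n x ∈ Ioo (-(L / 2)) 0 := by
  have hL0 : 0 < L := (sqrt_pos.2 three_pos).trans_le hL
  have hn' : (1 : ℝ) ≤ n := by exact_mod_cast hn
  exact neg_one_div_mem_Ioo hL (by nlinarith)

theorem theta_one_neg {x : ℝ} (hx : -L < x) : theta L 1 x < 0 :=
  div_neg_of_neg_of_pos (by norm_num) (by simp only [Int.cast_one, one_mul]; linarith)

theorem strictMonoOn_theta_one (L : ℝ) : StrictMonoOn (theta L 1) (Ioi (-L)) := by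
  intro x hx y hy hxy
  simp only [mem_Ioi] at hx hy
  simp only [theta, Int.cast_one, one_mul]
  rw [neg_div, neg_div, neg_lt_neg_iff]
  exact one_div_lt_one_div_of_lt (by linarith) (by linarith)

theorem theta_one_mem_Ioo (hL : 0 ≤ L) {b x : ℝ} (hb : -L < b) (hx : x ∈ Ioo b (L / 4)) :
    theta L 1 x ∈ Ioo (theta L 1 b) (L / 4) :=
  ⟨strictMonoOn_theta_one L hb (hb.trans hx.1) hx.1,
    (theta_one_neg (hb.trans hx.1)).trans_le (by positivity)⟩

theorem theta_one_iterate_stInv_sub (L y : ℝ) (j : ℕ) :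
    theta L 1 ((stInv L)^[j + 1] y - L) = (stInv L)^[j] y - L := by
  rw [Function.iterate_succ_apply', stInv, theta]
  -- `-1 / (-1 / u) = u` holds for every `u`, also for `u = 0` where both divisions give `0`.
  generalize (stInv L)^[j] y - L = u
  simp

end Theta

section Iterates

theorem stInv_iterate_zero (θ : ℝ) (i : ℕ) (hs : ∀ k < i, sin ((k + 1) * θ) ≠ 0) :
    (stInv (2 * cos θ))^[i] 0 = sin (i * θ) / sin ((i + 1) * θ) := by
  induction i with
  | zero => simp
  | succ i ih =>
    have hsi := hs i i.lt_succ_self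
    rw [Function.iterate_succ_apply', ih fun k hk => hs k (hk.trans i.lt_succ_self), stInv]
    have hrec : sin ((i + 2) * θ) = 2 * cos θ * sin ((i + 1) * θ) - sin (i * θ) := by
      rw [show (i + 2) * θ = (i + 1) * θ + θ by ring, show i * θ = (i + 1) * θ - θ by ring,
        sin_add, sin_sub]
      ring
    have hden : sin (i * θ) / sin ((i + 1) * θ) - 2 * cos θ =
        -(sin ((i + 2) * θ) / sin ((i + 1) * θ)) := by
      rw [hrec, sub_div, mul_div_assoc, div_self hsi]; ring
    push_cast
    rw [hden, div_neg, neg_div, neg_neg, one_div_div, show (i : ℝ) + 1 + 1 = i + 2 by ring]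

end Iterates

section Lam

theorem sqrt_three_le_lam {q : ℕ} (hq : 6 ≤ q) : √3 ≤ lam q := by
  have hq' : (6 : ℝ) ≤ q := by exact_mod_cast hq
  have hcos : cos (π / 6) ≤ cos (π / q) :=
    cos_le_cos_of_nonneg_of_le_pi (by positivity) (by linarith [pi_pos])
      (div_le_div_of_nonneg_left pi_pos.le (by norm_num) hq')
  rw [cos_pi_div_six] at hcos
  rw [lam]
  linarith

theorem sin_nat_mul_pi_div_pos {k q : ℕ} (hk : 0 < k) (hkq : k < q) : 0 < sin (k * (π / q)) := by
  have hq : (0 : ℝ) < q := by exact_mod_cast hk.trans hkq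
  apply sin_pos_of_pos_of_lt_pi (by positivity)
  rw [mul_div_assoc', div_lt_iff₀ hq, mul_comm]
  exact mul_lt_mul_of_pos_left (by exact_mod_cast hkq) pi_pos

theorem stInv_lam_iterate_zero {q i : ℕ} (hiq : i < q) :
    (stInv (lam q))^[i] 0 = sin (i * (π / q)) / sin ((i + 1) * (π / q)) :=
  stInv_iterate_zero _ i fun k hk => by
    exact_mod_cast (sin_nat_mul_pi_div_pos k.succ_pos (by omega)).ne'

theorem stInv_lam_iterate_zero_pos {q i : ℕ} (hi : 1 ≤ i) (hiq : i + 1 < q) :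
    0 < (stInv (lam q))^[i] 0 := by
  rw [stInv_lam_iterate_zero (by omega)]
  exact div_pos (sin_nat_mul_pi_div_pos hi (by omega))
    (by exact_mod_cast sin_nat_mul_pi_div_pos i.succ_pos hiq)

theorem stInv_lam_iterate_zero_eq_half {h q : ℕ} (hq : q = 2 * h + 2) :
    (stInv (lam q))^[h] 0 = lam q / 2 := by
  have hright : (h + 1) * (π / q) = π / 2 := by
    rw [hq]; push_cast; field_simp
  rw [stInv_lam_iterate_zero (by omega), hright, sin_pi_div_two, div_one,
    show (h : ℝ) * (π / q) = π / 2 - π / q by linarith, sin_pi_div_two_sub, lam]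
  ring

end Lam

/-- for even `q = 2h+2` with `h ≥ 2`, with
`c_i = T^{-1}(ST^{-1})^i · 0` and `θ_n(x) = -1/(x + nλ_q)`,
`I_i = (c_i, λ_q/4)`, `I_{-i} = (-λ_q/4, -c_i)`:
(a) `θ_n([c_i, λ_q/4]) ⊆ I_h` for `n ≥ 2`, `1 ≤ i ≤ h`;
(b) `θ_{-n}([c_i, λ_q/4]) ⊆ I_{-h}` for `n ≥ 1`, `1 ≤ i ≤ h`;
(c) `θ_1(I_i) ⊆ I_{i-1}` for `2 ≤ i ≤ h`;
and the mirror statements. -/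
theorem stmt11 (h q : ℕ) (hh : 2 ≤ h) (hq : q = 2 * h + 2) :
    let c : ℕ → ℝ := fun i => (fun x : ℝ => -1 / (x - lam q))^[i] 0 - lam q
    let th : ℤ → ℝ → ℝ := fun n x => -1 / (x + (n : ℝ) * lam q)
    (∀ n : ℤ, 2 ≤ n → ∀ i : ℕ, 1 ≤ i → i ≤ h →
      ∀ x ∈ Set.Icc (c i) (lam q / 4), th n x ∈ Set.Ioo (c h) (lam q / 4)) ∧
    (∀ n : ℤ, 1 ≤ n → ∀ i : ℕ, 1 ≤ i → i ≤ h →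
      ∀ x ∈ Set.Icc (c i) (lam q / 4),
        th (-n) x ∈ Set.Ioo (-(lam q) / 4) (-(c h))) ∧
    (∀ i : ℕ, 2 ≤ i → i ≤ h →
      ∀ x ∈ Set.Ioo (c i) (lam q / 4), th 1 x ∈ Set.Ioo (c (i - 1)) (lam q / 4)) ∧
    (∀ n : ℤ, 2 ≤ n → ∀ i : ℕ, 1 ≤ i → i ≤ h →
      ∀ x ∈ Set.Icc (-(lam q) / 4) (-(c i)),
        th (-n) x ∈ Set.Ioo (-(lam q) / 4) (-(c h))) ∧
    (∀ n : ℤ, 1 ≤ n → ∀ i : ℕ, 1 ≤ i → i ≤ h →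
      ∀ x ∈ Set.Icc (-(lam q) / 4) (-(c i)), th n x ∈ Set.Ioo (c h) (lam q / 4)) ∧
    (∀ i : ℕ, 2 ≤ i → i ≤ h →
      ∀ x ∈ Set.Ioo (-(lam q) / 4) (-(c i)),
        th (-1) x ∈ Set.Ioo (-(lam q) / 4) (-(c (i - 1)))) := by
  intro c th
  have hth : th = theta (lam q) := rfl
  have hc : ∀ i, c i = (stInv (lam q))^[i] 0 - lam q := fun _ => rfl
  rw [hth]
  clear_value c th
  have hL : √3 ≤ lam q := sqrt_three_le_lam (by omega)
  have hch : c h = -(lam q / 2) := by rw [hc, stInv_lam_iterate_zero_eq_half hq]; ring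
  have hc_gt : ∀ i, 1 ≤ i → i ≤ h → -lam q < c i := fun i hi hih => by
    linarith [hc i, stInv_lam_iterate_zero_pos (q := q) hi (by omega)]
  have hc_pred : ∀ i, 1 ≤ i → c (i - 1) = theta (lam q) 1 (c i) := fun i hi => by
    obtain ⟨j, rfl⟩ := Nat.exists_eq_add_of_le' hi
    rw [hc, hc, Nat.add_sub_cancel, theta_one_iterate_stInv_sub]
  have hL0 : 0 ≤ lam q := (sqrt_nonneg 3).trans hL
  have hlow : Ioo (-(lam q / 2)) 0 ⊆ Ioo (c h) (lam q / 4) := by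
    rw [hch]; exact Ioo_subset_Ioo_right (by positivity)
  refine ⟨?_, ?_, ?_, ?_, ?_, ?_⟩
  · intro n hn i hi hih x hx
    exact hlow (theta_mem_Ioo_of_two_le hL hn ((hc_gt i hi hih).trans_le hx.1))
  · intro n hn i hi hih x hx
    rw [neg_div, theta_neg_mem_Ioo_iff]
    exact hlow (theta_mem_Ioo_of_one_le hL hn (neg_le_neg hx.2))
  · intro i hi hih x hx
    rw [hc_pred i (by omega)]
    exact theta_one_mem_Ioo hL0 (hc_gt i (by omega) hih) hx
  · intro n hn i hi hih x hx
    rw [neg_div, theta_neg_mem_Ioo_iff]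
    exact hlow (theta_mem_Ioo_of_two_le hL hn (by linarith [hc_gt i hi hih, hx.2]))
  · intro n hn i hi hih x hx
    exact hlow (theta_mem_Ioo_of_one_le hL hn (by rw [← neg_div]; exact hx.1))
  · intro i hi hih x hx
    rw [neg_div, theta_neg_mem_Ioo_iff, hc_pred i (by omega)]
    rw [neg_div, ← neg_mem_Ioo_iff] at hx
    exact theta_one_mem_Ioo hL0 (hc_gt i (by omega) hih) hx
end
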